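/- For any positive integer m and distinct positive real numbers p_1 < p_2 < ... < p_m, together with arbitrary real numbers q_1, ..., q_m, the functions t ↦ tanh(p_1 t + q_1), ..., t ↦ tanh(p_m t + q_m) are linearly independent over ℝ as functions on ℝ. -/
import Mathlib

open Real Filter Topology Finset

private lemma tanh_eq_aux (x : ℝ) : Real.tanh x = 1 - 2 / (Real.exp (2*x) + 1) := by
  have h1 : Real.exp (2*x) = Real.exp x * Real.exp x := by
    rw [← Real.exp_add]; ring_nf
  have h2 : (0:ℝ) < Real.exp x := Real.exp_pos x
  have h3 : (0:ℝ) < Real.exp (2*x) + 1 := by positivity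
  rw [Real.tanh_eq_sinh_div_cosh, Real.sinh_eq, Real.cosh_eq, Real.exp_neg, h1]
  have h4 : Real.exp x + (Real.exp x)⁻¹ > 0 := by positivity
  field_simp
  ring

private lemma lin_atTop (a b : ℝ) (ha : 0 < a) :
    Tendsto (fun t : ℝ => a * t + b) atTop atTop :=
  tendsto_atTop_add_const_right _ b (tendsto_id.const_mul_atTop ha)

private lemma lim_main (a b : ℝ) (ha : 0 < a) :
    Tendsto (fun t : ℝ => Real.exp (a*t) / (Real.exp (a*t + b) + 1)) atTop
      (𝓝 (Real.exp (-b))) := by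
  have heq : ∀ t : ℝ, Real.exp (a*t) / (Real.exp (a*t + b) + 1)
      = 1 / (Real.exp b + Real.exp (-(a*t))) := by
    intro t
    rw [Real.exp_add, Real.exp_neg]
    have h1 : (0:ℝ) < Real.exp (a*t) := Real.exp_pos _
    have h2 : (0:ℝ) < Real.exp b := Real.exp_pos _
    have h3 : (0:ℝ) < Real.exp (a*t) * Real.exp b + 1 := by positivity
    field_simp
  have h0 : Tendsto (fun t : ℝ => Real.exp (-(a*t))) atTop (𝓝 0) := by
    apply Real.tendsto_exp_atBot.comp
    have h1 : Tendsto (fun t : ℝ => a * t) atTop atTop := tendsto_id.const_mul_atTop ha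
    simpa using tendsto_neg_atBot_iff.mpr h1
  have hlim : Tendsto (fun t : ℝ => 1 / (Real.exp b + Real.exp (-(a*t)))) atTop
      (𝓝 (1 / (Real.exp b + 0))) := by
    exact tendsto_const_nhds.div (tendsto_const_nhds.add h0)
      (by simp [Real.exp_ne_zero])
  have : (1 : ℝ) / (Real.exp b + 0) = Real.exp (-b) := by
    rw [add_zero, one_div, ← Real.exp_neg]
  rw [this] at hlim
  exact hlim.congr (fun t => (heq t).symm)

private lemma lim_small (a a' b : ℝ) (h : a < a') :
    Tendsto (fun t : ℝ => Real.exp (a*t) / (Real.exp (a'*t + b) + 1)) atTop (𝓝 0) := by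
  have hub : ∀ t : ℝ, Real.exp (a*t) / (Real.exp (a'*t + b) + 1)
      ≤ Real.exp ((a-a')*t - b) := by
    intro t
    rw [div_le_iff₀ (by positivity)]
    have key : Real.exp ((a-a')*t - b) * Real.exp (a'*t+b) = Real.exp (a*t) := by
      rw [← Real.exp_add]; ring_nf
    nlinarith [Real.exp_pos ((a-a')*t - b), Real.exp_pos (a'*t+b)]
  have hlb : ∀ t : ℝ, (0:ℝ) ≤ Real.exp (a*t) / (Real.exp (a'*t + b) + 1) := by
    intro t; positivity
  have hup : Tendsto (fun t : ℝ => Real.exp ((a-a')*t - b)) atTop (𝓝 0) := by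
    apply Real.tendsto_exp_atBot.comp
    have h1 : Tendsto (fun t : ℝ => -((a'-a)*t + b)) atTop atBot :=
      tendsto_neg_atBot_iff.mpr (lin_atTop (a'-a) b (by linarith))
    exact h1.congr (fun t => by ring)
  exact tendsto_of_tendsto_of_tendsto_of_le_of_le tendsto_const_nhds hup hlb hub

/-- tanh functions with distinct positive slopes are linearly independent. -/
theorem tanh_linear_independent (m : ℕ) (hm : 0 < m) (p q : Fin m → ℝ)
    (hpos : ∀ i, 0 < p i) (hmono : StrictMono p)
    (c : Fin m → ℝ)
    (hzero : ∀ t : ℝ, ∑ i, c i * Real.tanh (p i * t + q i) = 0) :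
    ∀ i, c i = 0 := by
  -- reformulate in terms of g i t = c i / (exp(2(p i t + q i)) + 1)
  have hzero2 : ∀ t : ℝ, ∑ i, c i * (1 - 2 / (Real.exp (2*(p i * t + q i)) + 1)) = 0 := by
    intro t
    rw [← hzero t]
    exact Finset.sum_congr rfl (fun i _ => by rw [tanh_eq_aux])
  have hsum : ∀ t : ℝ, ∑ i, c i / (Real.exp (2*(p i * t + q i)) + 1) = (∑ i, c i) / 2 := by
    intro t
    have expand : ∑ i, c i * (1 - 2 / (Real.exp (2*(p i * t + q i)) + 1))
        = (∑ i, c i) - 2 * ∑ i, c i / (Real.exp (2*(p i * t + q i)) + 1) := by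
      rw [Finset.mul_sum, ← Finset.sum_sub_distrib]
      exact Finset.sum_congr rfl (fun i _ => by ring)
    have := hzero2 t
    rw [expand] at this
    linarith
  have hterm0 : ∀ i, Tendsto (fun t : ℝ => c i / (Real.exp (2*(p i * t + q i)) + 1))
      atTop (𝓝 0) := by
    intro i
    have h1 : Tendsto (fun t : ℝ => 2*(p i * t + q i)) atTop atTop := by
      exact (lin_atTop (2 * p i) (2 * q i) (by linarith [hpos i])).congr (fun t => by ring)
    have h2 : Tendsto (fun t : ℝ => Real.exp (2*(p i * t + q i)) + 1) atTop atTop :=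
      tendsto_atTop_add_const_right _ 1 (Real.tendsto_exp_atTop.comp h1)
    have h3 := h2.inv_tendsto_atTop
    have := h3.const_mul (c i)
    simpa [div_eq_mul_inv, Pi.inv_def] using this
  have hS : ∑ i, c i = 0 := by
    have hlim : Tendsto (fun t : ℝ => ∑ i, c i / (Real.exp (2*(p i * t + q i)) + 1))
        atTop (𝓝 0) := by
      have := tendsto_finset_sum Finset.univ (fun i (_ : i ∈ Finset.univ) => hterm0 i)
      simpa using this
    have := tendsto_nhds_unique (hlim.congr hsum) tendsto_const_nhds
    linarith
  have hg : ∀ t : ℝ, ∑ i, c i / (Real.exp (2*(p i * t + q i)) + 1) = 0 := by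
    intro t; rw [hsum t, hS]; norm_num
  -- strong induction on the index value
  have key : ∀ n : ℕ, ∀ j : Fin m, (j : ℕ) = n → c j = 0 := by
    intro n
    induction n using Nat.strong_induction_on with
    | _ n ih =>
      intro j hj
      have hih : ∀ i : Fin m, i < j → c i = 0 := by
        intro i hi
        have hv : (i : ℕ) < n := by
          have := Fin.lt_iff_val_lt_val.mp hi
          omega
        exact ih (i : ℕ) hv i rfl
      -- multiply by exp(2 p j t) and take the limit
      have hlimF : Tendsto
          (fun t : ℝ => ∑ i, c i *
            (Real.exp (2 * p j * t) / (Real.exp (2*(p i * t + q i)) + 1)))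
          atTop (𝓝 (c j * Real.exp (-(2 * q j)))) := by
        have htgt : c j * Real.exp (-(2 * q j))
            = ∑ i, (if i = j then c j * Real.exp (-(2 * q j)) else 0) := by
          simp
        rw [htgt]
        apply tendsto_finset_sum
        intro i _
        rcases lt_trichotomy i j with h | h | h
        · have hci : c i = 0 := hih i h
          have hij : i ≠ j := ne_of_lt h
          simp [hci, hij]
        · subst h
          simp only [if_pos rfl]
          have hM := (lim_main (2 * p i) (2 * q i) (by linarith [hpos i])).const_mul (c i)
          exact hM.congr (fun t => by rw [show 2*(p i * t + q i) = 2 * p i * t + 2 * q i by ring])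
        · have hij : i ≠ j := (ne_of_lt h).symm
          simp only [if_neg hij]
          have hM := (lim_small (2 * p j) (2 * p i) (2 * q i)
            (by have := hmono h; linarith)).const_mul (c i)
          rw [mul_zero] at hM
          exact hM.congr (fun t => by rw [show 2*(p i * t + q i) = 2 * p i * t + 2 * q i by ring])
      have hFzero : ∀ t : ℝ, ∑ i, c i *
          (Real.exp (2 * p j * t) / (Real.exp (2*(p i * t + q i)) + 1)) = 0 := by
        intro t
        have : ∑ i, c i * (Real.exp (2 * p j * t) / (Real.exp (2*(p i * t + q i)) + 1))
            = Real.exp (2 * p j * t) * ∑ i, c i / (Real.exp (2*(p i * t + q i)) + 1) := by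
          rw [Finset.mul_sum]
          exact Finset.sum_congr rfl (fun i _ => by ring)
        rw [this, hg t, mul_zero]
      have := tendsto_nhds_unique hlimF
        ((tendsto_const_nhds (α := ℝ)).congr (fun t => (hFzero t).symm))
      have hexp := Real.exp_pos (-(2 * q j))
      rcases mul_eq_zero.mp this with h | h
      · exact h
      · exact absurd h (ne_of_gt hexp)
  intro i
  exact key (i : ℕ) i rfl
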